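/- arXiv:1205.4749 — 6 statements merged into one kernel-verified Lean document; each statement's English description precedes it below -/
import Mathlib

section
/- Let T = (V,E) be a finite tree, β ≥ 0, and B : V → ℝ external fields. For every ordered pair of adjacent vertices (i,j) of T, the message satisfies the recursion m_{i→j} = tanh( B_i + Σ_{k ∈ ∂i \ {j}} atanh( tanh(β) · m_{k→i} ) ), where ∂i denotes the set of neighbors of i in T. -/
open Real Finset

attribute [local instance] Classical.propDecidable

/-- the inverse hyperbolic tangent `atanh x = ½ log((1+x)/(1-x))`. -/
noncomputable def atanh (x : ℝ) : ℝ := (1 / 2) * Real.log ((1 + x) / (1 - x))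

/-- spin value of a Boolean: `true ↦ +1`, `false ↦ -1`. -/
def spin (b : Bool) : ℝ := if b then 1 else -1

/-- the product `x_i x_j` of the spins at the two endpoints of an edge. -/
def edgeTerm {V : Type} (x : V → Bool) : Sym2 V → ℝ :=
  Sym2.lift ⟨fun i j => spin (x i) * spin (x j), fun i j => by ring⟩

variable {V : Type} [Fintype V]

/-- Ising Hamiltonian `β Σ_{(i,j)∈E} x_i x_j + Σ_i B_i x_i`. -/
noncomputable def ham (G : SimpleGraph V) (β : ℝ) (B : V → ℝ) (x : V → Bool) : ℝ :=
  β * ∑ e ∈ G.edgeFinset, edgeTerm x e + ∑ v, B v * spin (x v)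

/-- expectation `⟨f⟩` under the Ising measure `ν^{β,B}_G` on `{-1,+1}^V`. -/
noncomputable def isingExp (G : SimpleGraph V) (β : ℝ) (B : V → ℝ)
    (f : (V → Bool) → ℝ) : ℝ :=
  (∑ x : V → Bool, f x * Real.exp (ham G β B x)) /
    (∑ x : V → Bool, Real.exp (ham G β B x))

/-- `T_{i→j}` : the connected component of `i` in the graph obtained from `T`
by deleting the edge `{i,j}` (kept as a graph on the ambient vertex set;
vertices outside the component are isolated). -/
def msgGraph (T : SimpleGraph V) (i j : V) : SimpleGraph V where
  Adj a b := (T.deleteEdges {s(i, j)}).Adj a b ∧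
      (T.deleteEdges {s(i, j)}).Reachable a i ∧ (T.deleteEdges {s(i, j)}).Reachable b i
  symm := ⟨fun a b ⟨h, ha, hb⟩ => ⟨h.symm, hb, ha⟩⟩
  loopless := ⟨fun a h => (T.deleteEdges {s(i, j)}).loopless.irrefl a h.1⟩

/-- the external fields `B` restricted to the component `T_{i→j}` (zero elsewhere). -/
noncomputable def msgField (T : SimpleGraph V) (B : V → ℝ) (i j : V) : V → ℝ :=
  fun v => if (T.deleteEdges {s(i, j)}).Reachable v i then B v else 0

/-- the message `m_{i→j}`, i.e. `⟨x_i⟩` under the Ising measure on `T_{i→j}`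
with inverse temperature `β` and fields `B` restricted to `T_{i→j}`. -/
noncomputable def msg (T : SimpleGraph V) (β : ℝ) (B : V → ℝ) (i j : V) : ℝ :=
  isingExp (msgGraph T i j) β (msgField T B i j) (fun x => spin (x i))


/-!
Deleting the edges `{i, k}`, `k ∈ ∂i \ {j}`, splits `T_{i→j}` into the vertex `i` and the pairwise
disjoint subtrees `T_{k→i}`, so its Hamiltonian is `B_i x_i + Σ_k (β x_i x_k + H_{k→i})`, where
`H_{k→i}` only sees the spins of `T_{k→i}`. With `x_i = ±1` fixed the partition sum factorizes over
`k`, and the factor of `T_{k→i}` is `cosh β · Z_{k→i} · (1 ± tanh β · m_{k→i})`, which is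
proportional to `exp (± atanh (tanh β · m_{k→i}))`. Hence the marginal of `x_i` is proportional to
`exp (u x_i)` with `u = B_i + Σ_k atanh (tanh β · m_{k→i})`, and `⟨x_i⟩ = tanh u`.
-/

section Factorization

variable {ι α R : Type*}

theorem DependsOn.finsetProd [CommMonoid R] {κ : Type*} {s : Finset κ} {S : κ → Set ι}
    {g : κ → (ι → α) → R} (hg : ∀ k ∈ s, DependsOn (g k) (S k)) :
    DependsOn (fun x => ∏ k ∈ s, g k x) (⋃ k ∈ s, S k) := fun _ _ hxy =>
  Finset.prod_congr rfl fun k hk => hg k hk fun v hv => hxy v (Set.mem_biUnion hk hv)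

theorem sum_eq_sum_filter_true_add_sum_filter_false [Fintype ι] [AddCommMonoid R] (i : ι)
    (w : (ι → Bool) → R) :
    ∑ x, w x = ∑ x with x i = true, w x + ∑ x with x i = false, w x := by
  rw [← Finset.sum_filter_add_sum_filter_not Finset.univ fun x => x i = true]
  simp

variable [Fintype ι] [Fintype α] [CommSemiring R]

theorem card_mul_sum_mul_of_dependsOn {S S' : Set ι} {F G : (ι → α) → R}
    (hF : DependsOn F S) (hG : DependsOn G S') (hS : Disjoint S S') :
    Fintype.card (ι → α) * ∑ x, F x * G x = (∑ x, F x) * ∑ x, G x := by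
  -- exchanging the two configurations on `S` decouples `F` from `G`
  let f (p : (ι → α) × (ι → α)) := (S.piecewise p.2 p.1, S.piecewise p.1 p.2)
  have hf : Function.Involutive f := fun p => by ext v <;> by_cases hv : v ∈ S <;> simp [f, hv]
  let swap : (ι → α) × (ι → α) ≃ (ι → α) × (ι → α) := ⟨f, f, hf, hf⟩
  have hswap : ∀ p, F (swap p).1 * G (swap p).2 = F p.2 * G p.2 := by
    rintro ⟨x, y⟩
    show F (S.piecewise y x) * G (S.piecewise x y) = F y * G y
    congr 1
    · exact hF fun v hv => by simp [hv]
    · exact hG fun v hv => by simp [Set.disjoint_right.mp hS hv]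
  calc Fintype.card (ι → α) * ∑ x, F x * G x
      = ∑ p, F (swap p).1 * G (swap p).2 := by
        simp [hswap, Fintype.sum_prod_type, Finset.mul_sum]
    _ = ∑ p : (ι → α) × (ι → α), F p.1 * G p.2 := Equiv.sum_comp swap fun p => F p.1 * G p.2
    _ = (∑ x, F x) * ∑ x, G x := by rw [Fintype.sum_prod_type, Finset.sum_mul_sum]

theorem card_pow_mul_sum_prod_of_dependsOn {κ : Type*} (s : Finset κ) {S : κ → Set ι}
    {g : κ → (ι → α) → R} (hg : ∀ k ∈ s, DependsOn (g k) (S k))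
    (hS : (s : Set κ).PairwiseDisjoint S) :
    Fintype.card (ι → α) ^ s.card * ∑ x, ∏ k ∈ s, g k x =
      Fintype.card (ι → α) * ∏ k ∈ s, ∑ x, g k x := by
  induction s using Finset.induction_on with
  | empty => simp
  | @insert a s ha ih =>
    have hdisj : Disjoint (S a) (⋃ k ∈ s, S k) := by
      refine Set.disjoint_iUnion₂_right.mpr fun k hk => hS (by simp) (by simp [hk]) ?_
      rintro rfl
      exact ha hk
    have hpair := card_mul_sum_mul_of_dependsOn (hg a (by simp))
      (DependsOn.finsetProd fun k hk => hg k (by simp [hk])) hdisj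
    have ih' := ih (fun k hk => hg k (by simp [hk])) (hS.subset (by simp))
    simp only [Finset.prod_insert ha, Finset.card_insert_of_notMem ha]
    calc (Fintype.card (ι → α) : R) ^ (s.card + 1) * ∑ x, g a x * ∏ k ∈ s, g k x
        = Fintype.card (ι → α) ^ s.card * (Fintype.card (ι → α) * ∑ x, g a x * ∏ k ∈ s, g k x) := by
          ring
      _ = Fintype.card (ι → α) * ((∑ x, g a x) * ∏ k ∈ s, ∑ x, g k x) := by
          rw [hpair, mul_left_comm, ih', mul_left_comm]

theorem two_mul_sum_filter_eq_sum {F : (ι → Bool) → R} (i : ι) (hF : DependsOn F {i}ᶜ)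
    (b : Bool) : 2 * ∑ x with x i = b, F x = ∑ x, F x := by
  let flip (x : ι → Bool) := Function.update x i (!x i)
  have hflip : Function.Involutive flip := fun x => by
    ext v
    by_cases hv : v = i <;> simp [flip, hv]
  have hsum : ∑ x with x i = b, F x = ∑ x with ¬x i = b, F x :=
    Finset.sum_nbij' flip flip (by simp [flip]) (by simp [flip, Bool.eq_not_iff])
      (fun x _ => hflip x) (fun x _ => hflip x) fun x _ => hF fun v hv => by
        simp [flip, Function.update_of_ne (Set.mem_compl_singleton_iff.mp hv)]
  rw [two_mul]
  nth_rewrite 2 [hsum]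
  exact Finset.sum_filter_add_sum_filter_not _ _ _

end Factorization

section Hyperbolic

theorem exp_mul_spin_mul_spin (J : ℝ) (a b : Bool) :
    exp (J * (spin a * spin b)) = cosh J * (1 + spin a * spin b * tanh J) := by
  have hsinh : cosh J * tanh J = sinh J := by
    rw [tanh_eq_sinh_div_cosh, mul_div_cancel₀ _ (cosh_pos J).ne']
  cases a <;> cases b <;>
    simp [spin, mul_add, mul_sub, hsinh, cosh_add_sinh, ← cosh_sub_sinh, ← sub_eq_add_neg]

theorem one_add_spin_mul_eq {t : ℝ} (ht : |t| < 1) (b : Bool) :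
    1 + spin b * t = √(1 - t ^ 2) * exp (spin b * atanh t) := by
  obtain ⟨htl, htr⟩ := abs_lt.mp ht
  have h1 : 0 < 1 + t := by linarith
  have h2 : 0 < 1 - t := by linarith
  have hexp : exp (atanh t) ^ 2 = (1 + t) / (1 - t) := by
    rw [← exp_nat_mul, atanh, Nat.cast_ofNat, ← mul_assoc, show (2 : ℝ) * (1 / 2) = 1 by norm_num,
      one_mul, exp_log (div_pos h1 h2)]
  have hpos : 0 ≤ 1 + spin b * t := by cases b <;> simp [spin] <;> linarith
  rw [← sq_eq_sq₀ hpos (by positivity), mul_pow, sq_sqrt (by nlinarith)]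
  cases b
  · simp only [spin, if_neg Bool.false_ne_true, neg_one_mul, exp_neg, inv_pow, hexp]
    field_simp
    ring
  · rw [spin, if_pos rfl, one_mul, one_mul, hexp]
    field_simp
    ring

end Hyperbolic

section Ising

variable {G : SimpleGraph V} {β : ℝ} {B : V → ℝ}

theorem isingExp_spin_eq_tanh {i : V} {c u : ℝ} (hc : 0 < c)
    (h : ∀ b, ∑ x with x i = b, exp (ham G β B x) = c * exp (spin b * u)) :
    isingExp G β B (fun x => spin (x i)) = tanh u := by
  have hspin : ∀ b, ∑ x with x i = b, spin (x i) * exp (ham G β B x) =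
      spin b * ∑ x with x i = b, exp (ham G β B x) := fun b => by
    rw [Finset.mul_sum]
    exact Finset.sum_congr rfl fun x hx => by rw [(Finset.mem_filter.mp hx).2]
  rw [isingExp, sum_eq_sum_filter_true_add_sum_filter_false i, hspin, hspin,
    sum_eq_sum_filter_true_add_sum_filter_false i, h, h, tanh_eq]
  simp only [spin, if_pos, if_neg Bool.false_ne_true, one_mul, neg_one_mul]
  rw [← mul_add, ← mul_neg, ← mul_add, mul_div_mul_left _ _ hc.ne', sub_eq_add_neg]

theorem abs_isingExp_spin_le_one (k : V) : |isingExp G β B fun x => spin (x k)| ≤ 1 := by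
  have hZ : 0 < ∑ x, exp (ham G β B x) := Finset.sum_pos (fun x _ => exp_pos _) Finset.univ_nonempty
  rw [isingExp, abs_div, abs_of_pos hZ, div_le_one hZ]
  refine (Finset.abs_sum_le_sum_abs _ _).trans (le_of_eq (Finset.sum_congr rfl fun x _ => ?_))
  rw [abs_mul, abs_of_pos (exp_pos _)]
  cases x k <;> simp [spin]

theorem sum_exp_coupling_add_ham (k : V) (J : ℝ) (b : Bool) :
    ∑ x, exp (J * (spin b * spin (x k)) + ham G β B x) =
      cosh J * (∑ x, exp (ham G β B x)) *
        (1 + spin b * (tanh J * isingExp G β B fun x => spin (x k))) := by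
  have hZ : ∑ x, exp (ham G β B x) ≠ 0 :=
    (Finset.sum_pos (fun x _ => exp_pos _) Finset.univ_nonempty).ne'
  simp only [exp_add, exp_mul_spin_mul_spin, isingExp]
  field_simp
  simp only [Finset.mul_sum, ← Finset.sum_add_distrib]
  refine Finset.sum_congr rfl fun x _ => ?_
  ring

theorem dependsOn_ham {S : Set V} (hG : ∀ a b, G.Adj a b → a ∈ S) (hB : ∀ v ∉ S, B v = 0) :
    DependsOn (ham G β B) S := fun x y hxy => by
  have hedge : ∑ e ∈ G.edgeFinset, edgeTerm x e = ∑ e ∈ G.edgeFinset, edgeTerm y e := by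
    refine Finset.sum_congr rfl fun e he => ?_
    induction e with
    | _ a b =>
      have hab : G.Adj a b := G.mem_edgeFinset.mp he
      simp only [edgeTerm, Sym2.lift_mk, hxy a (hG a b hab), hxy b (hG b a hab.symm)]
  have hfield : ∑ v, B v * spin (x v) = ∑ v, B v * spin (y v) := by
    refine Finset.sum_congr rfl fun v _ => ?_
    by_cases hv : v ∈ S
    · rw [hxy v hv]
    · simp [hB v hv]
  rw [ham, ham, hedge, hfield]

end Ising

section Branch

variable {V : Type*} {T : SimpleGraph V} {i j k v : V}

/-- The vertex set of `T_{i→j}`. -/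
def branch (T : SimpleGraph V) (i j : V) : Set V :=
  {v | (T.deleteEdges {s(i, j)}).Reachable v i}

theorem mem_branch_self : i ∈ branch T i j := SimpleGraph.Reachable.refl i

theorem mem_branch_iff_exists_walk : v ∈ branch T i j ↔ ∃ w : T.Walk v i, s(i, j) ∉ w.edges :=
  SimpleGraph.reachable_deleteEdges_iff_exists_walk

theorem mem_branch_of_adj {a b : V} (ha : a ∈ branch T i j) (hab : T.Adj a b)
    (he : s(a, b) ≠ s(i, j)) : b ∈ branch T i j :=
  (SimpleGraph.Adj.reachable (SimpleGraph.deleteEdges_adj.mpr ⟨hab.symm, fun h =>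
    he (Sym2.eq_swap.trans (Set.mem_singleton_iff.mp h))⟩)).trans ha

theorem notMem_branch (hT : T.IsAcyclic) (hki : T.Adj k i) : i ∉ branch T k i := fun h =>
  (SimpleGraph.isBridge_iff.mp (SimpleGraph.isAcyclic_iff_forall_adj_isBridge.mp hT hki)) h.symm

theorem mem_branch_of_walk (w : T.Walk v k) (hw : i ∉ w.support) : v ∈ branch T k i :=
  mem_branch_iff_exists_walk.mpr ⟨w, fun he => hw (w.snd_mem_support_of_mem_edges he)⟩

theorem exists_walk_of_mem_branch (hT : T.IsAcyclic) (hki : T.Adj k i) (hv : v ∈ branch T k i) :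
    ∃ w : T.Walk v k, i ∉ w.support := by
  obtain ⟨p⟩ := hv
  refine ⟨p.transfer T fun e he => (SimpleGraph.edgeSet_deleteEdges _ ▸
    p.edges_subset_edgeSet he).1, fun hi => notMem_branch hT hki ?_⟩
  rw [SimpleGraph.Walk.support_transfer] at hi
  exact ⟨p.dropUntil i hi⟩

theorem branch_subset (hT : T.IsAcyclic) (hik : T.Adj i k) (hkj : k ≠ j) :
    branch T k i ⊆ branch T i j := by
  intro v hv
  obtain ⟨w, hw⟩ := exists_walk_of_mem_branch hT hik.symm hv
  refine mem_branch_iff_exists_walk.mpr ⟨w.concat hik.symm, fun he => ?_⟩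
  rw [SimpleGraph.Walk.edges_concat, List.concat_eq_append, List.mem_append,
    List.mem_singleton, Sym2.eq_iff] at he
  rcases he with he | ⟨hik', -⟩ | ⟨-, hjk⟩
  · exact hw (w.fst_mem_support_of_mem_edges he)
  · exact hik.ne hik'
  · exact hkj hjk.symm

theorem disjoint_branch (hT : T.IsAcyclic) {k' : V} (hki : T.Adj k i) (hk'i : T.Adj k' i)
    (hkk' : k ≠ k') : Disjoint (branch T k i) (branch T k' i) := by
  -- a common vertex `v` yields the walk `i → k' → v → k` that avoids the bridge `{k, i}`
  refine Set.disjoint_left.mpr fun v hv hv' => notMem_branch hT hki ?_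
  obtain ⟨w, hw⟩ := exists_walk_of_mem_branch hT hki hv
  obtain ⟨w', hw'⟩ := exists_walk_of_mem_branch hT hk'i hv'
  refine mem_branch_iff_exists_walk.mpr ⟨SimpleGraph.Walk.cons hk'i.symm (w'.reverse.append w),
    fun he => ?_⟩
  rw [SimpleGraph.Walk.edges_cons, List.mem_cons, SimpleGraph.Walk.edges_append,
    List.mem_append, SimpleGraph.Walk.edges_reverse, List.mem_reverse] at he
  rcases he with he | he | he
  · rw [Sym2.eq_iff] at he
    rcases he with ⟨hki', -⟩ | ⟨hkk'', -⟩
    · exact hki.ne hki'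
    · exact hkk' hkk''
  · exact hw' (w'.snd_mem_support_of_mem_edges he)
  · exact hw (w.snd_mem_support_of_mem_edges he)

theorem exists_mem_branch_of_mem_branch (hv : v ∈ branch T i j) (hvi : v ≠ i) :
    ∃ k, T.Adj i k ∧ k ≠ j ∧ v ∈ branch T k i := by
  -- `k` is the second vertex of the path from `i` to `v` in `T_{i→j}`
  obtain ⟨p⟩ := hv
  have hp : p.bypass.reverse.IsPath := p.bypass_isPath.reverse
  cases hr : p.bypass.reverse with
  | nil => exact absurd rfl hvi
  | @cons _ k _ hik q =>
    rw [hr, SimpleGraph.Walk.cons_isPath_iff] at hp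
    obtain ⟨hik, hne⟩ := SimpleGraph.deleteEdges_adj.mp hik
    refine ⟨k, hik, fun hkj => hne (by rw [hkj]; rfl), mem_branch_of_walk
      (q.reverse.transfer T fun e he => (SimpleGraph.edgeSet_deleteEdges _ ▸
        q.reverse.edges_subset_edgeSet he).1) ?_⟩
    rw [SimpleGraph.Walk.support_transfer, SimpleGraph.Walk.support_reverse, List.mem_reverse]
    exact hp.2

end Branch

section MessageGraph

variable {V : Type} {T : SimpleGraph V} {i j : V}

theorem msgGraph_adj_iff (hT : T.IsAcyclic) (hij : T.Adj i j) {a b : V} :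
    (msgGraph T i j).Adj a b ↔ T.Adj a b ∧ a ∈ branch T i j ∧ b ∈ branch T i j := by
  refine ⟨fun h => ⟨(SimpleGraph.deleteEdges_adj.mp h.1).1, h.2⟩, fun ⟨hab, ha, hb⟩ =>
    ⟨SimpleGraph.deleteEdges_adj.mpr ⟨hab, fun he => ?_⟩, ha, hb⟩⟩
  rw [Set.mem_singleton_iff, Sym2.eq_iff] at he
  rcases he with ⟨-, rfl⟩ | ⟨rfl, -⟩
  · exact notMem_branch hT hij hb
  · exact notMem_branch hT hij ha

theorem msgGraph_adj_iff_exists (hT : T.IsAcyclic) (hij : T.Adj i j) {a b : V} :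
    (msgGraph T i j).Adj a b ↔
      (∃ k, T.Adj i k ∧ k ≠ j ∧ s(a, b) = s(i, k)) ∨
        ∃ k, T.Adj i k ∧ k ≠ j ∧ (msgGraph T k i).Adj a b := by
  have hne_j {k : V} (hk : k ∈ branch T i j) : k ≠ j := by
    rintro rfl
    exact notMem_branch hT hij hk
  rw [msgGraph_adj_iff hT hij]
  constructor
  · rintro ⟨hab, ha, hb⟩
    by_cases hai : a = i
    · subst hai
      exact Or.inl ⟨b, hab, hne_j hb, rfl⟩
    by_cases hbi : b = i
    · subst hbi
      exact Or.inl ⟨a, hab.symm, hne_j ha, Sym2.eq_swap⟩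
    obtain ⟨k, hik, hkj, hak⟩ := exists_mem_branch_of_mem_branch ha hai
    have hbk : b ∈ branch T k i := mem_branch_of_adj hak hab fun he => by
      rcases Sym2.eq_iff.mp he with ⟨-, hbi'⟩ | ⟨hai', -⟩
      · exact hbi hbi'
      · exact hai hai'
    exact Or.inr ⟨k, hik, hkj, (msgGraph_adj_iff hT hik.symm).mpr ⟨hab, hak, hbk⟩⟩
  · rintro (⟨k, hik, hkj, he⟩ | ⟨k, hik, hkj, h⟩)
    · have hk : k ∈ branch T i j := branch_subset hT hik hkj mem_branch_self
      rcases Sym2.eq_iff.mp he with ⟨rfl, rfl⟩ | ⟨rfl, rfl⟩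
      · exact ⟨hik, mem_branch_self, hk⟩
      · exact ⟨hik.symm, hk, mem_branch_self⟩
    · obtain ⟨hab, ha, hb⟩ := (msgGraph_adj_iff hT hik.symm).mp h
      exact ⟨hab, branch_subset hT hik hkj ha, branch_subset hT hik hkj hb⟩

end MessageGraph

section Decomposition

variable {T : SimpleGraph V} {i j : V}

theorem mem_neighborFinset_sdiff_singleton {k : V} :
    k ∈ T.neighborFinset i \ {j} ↔ T.Adj i k ∧ k ≠ j := by
  simp

theorem sum_edgeFinset_msgGraph (hT : T.IsAcyclic) (hij : T.Adj i j) (f : Sym2 V → ℝ) :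
    ∑ e ∈ (msgGraph T i j).edgeFinset, f e =
      ∑ k ∈ T.neighborFinset i \ {j}, (f s(i, k) + ∑ e ∈ (msgGraph T k i).edgeFinset, f e) := by
  set N := T.neighborFinset i \ {j}
  have hedges : (msgGraph T i j).edgeFinset =
      N.image (fun k => s(i, k)) ∪ N.biUnion fun k => (msgGraph T k i).edgeFinset := by
    ext e
    induction e with
    | _ a b =>
      simp only [SimpleGraph.mem_edgeFinset, SimpleGraph.mem_edgeSet, Finset.mem_union,
        Finset.mem_image, Finset.mem_biUnion, msgGraph_adj_iff_exists hT hij, N,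
        mem_neighborFinset_sdiff_singleton, and_assoc, eq_comm]
  have hinj : Set.InjOn (fun k => s(i, k)) N := fun k _ k' _ h => Sym2.congr_right.mp h
  have hdisj :
      Disjoint (N.image fun k => s(i, k)) (N.biUnion fun k => (msgGraph T k i).edgeFinset) := by
    simp only [Finset.disjoint_left, Finset.mem_image, Finset.mem_biUnion, N,
      mem_neighborFinset_sdiff_singleton]
    rintro _ ⟨k, -, rfl⟩ ⟨k', ⟨hik', -⟩, he⟩
    exact notMem_branch hT hik'.symm (SimpleGraph.mem_edgeFinset.mp he).2.1
  have hpair : (N : Set V).PairwiseDisjoint fun k => (msgGraph T k i).edgeFinset := by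
    intro k hk k' hk' hkk'
    rw [Finset.mem_coe, mem_neighborFinset_sdiff_singleton] at hk hk'
    refine Finset.disjoint_left.mpr fun e he he' => ?_
    induction e with
    | _ a b =>
      exact Set.disjoint_left.mp (disjoint_branch hT (T.adj_symm hk.1) (T.adj_symm hk'.1) hkk')
        (SimpleGraph.mem_edgeFinset.mp he).2.1 (SimpleGraph.mem_edgeFinset.mp he').2.1
  rw [hedges, Finset.sum_union hdisj, Finset.sum_image hinj, Finset.sum_biUnion hpair,
    Finset.sum_add_distrib]

theorem sum_msgField_mul (hT : T.IsAcyclic) (hij : T.Adj i j) (B f : V → ℝ) :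
    ∑ v, msgField T B i j v * f v =
      B i * f i + ∑ k ∈ T.neighborFinset i \ {j}, ∑ v, msgField T B k i v * f v := by
  set N := T.neighborFinset i \ {j}
  have hfilter (k l : V) :
      ∑ v, msgField T B k l v * f v = ∑ v with v ∈ branch T k l, B v * f v := by
    rw [Finset.sum_filter]
    exact Finset.sum_congr rfl fun v _ => by simp only [msgField, ite_mul, zero_mul]; congr
  have hbranch : ({v | v ∈ branch T i j} : Finset V) =
      insert i (N.biUnion fun k => {v | v ∈ branch T k i}) := by
    ext v
    simp only [Finset.mem_filter, Finset.mem_univ, true_and, Finset.mem_insert,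
      Finset.mem_biUnion, N, mem_neighborFinset_sdiff_singleton, and_assoc]
    constructor
    · intro hv
      by_cases hvi : v = i
      · exact Or.inl hvi
      · exact Or.inr (exists_mem_branch_of_mem_branch hv hvi)
    · rintro (rfl | ⟨k, hik, hkj, hv⟩)
      · exact mem_branch_self
      · exact branch_subset hT hik hkj hv
  have hi : i ∉ N.biUnion fun k => ({v | v ∈ branch T k i} : Finset V) := by
    simp only [Finset.mem_biUnion, Finset.mem_filter, Finset.mem_univ, true_and, N,
      mem_neighborFinset_sdiff_singleton, not_exists, not_and]
    exact fun k hk => notMem_branch hT hk.1.symm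
  have hpair : (N : Set V).PairwiseDisjoint fun k => ({v | v ∈ branch T k i} : Finset V) := by
    intro k hk k' hk' hkk'
    rw [Finset.mem_coe, mem_neighborFinset_sdiff_singleton] at hk hk'
    exact Finset.disjoint_left.mpr fun v hv hv' =>
      Set.disjoint_left.mp (disjoint_branch hT hk.1.symm hk'.1.symm hkk')
        (Finset.mem_filter.mp hv).2 (Finset.mem_filter.mp hv').2
  rw [hfilter, hbranch, Finset.sum_insert hi, Finset.sum_biUnion hpair]
  simp only [hfilter]

theorem ham_msgGraph (hT : T.IsAcyclic) (hij : T.Adj i j) (β : ℝ) (B : V → ℝ) (x : V → Bool) :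
    ham (msgGraph T i j) β (msgField T B i j) x =
      B i * spin (x i) + ∑ k ∈ T.neighborFinset i \ {j},
        (β * (spin (x i) * spin (x k)) + ham (msgGraph T k i) β (msgField T B k i) x) := by
  simp only [ham, sum_edgeFinset_msgGraph hT hij, sum_msgField_mul hT hij, edgeTerm, Sym2.lift_mk,
    Finset.sum_add_distrib, Finset.mul_sum, mul_add]
  ring

end Decomposition

section Recursion

variable {T : SimpleGraph V} {i j : V}

theorem sum_filter_exp_ham_msgGraph (hT : T.IsAcyclic) (hij : T.Adj i j) (β : ℝ) (B : V → ℝ)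
    (b : Bool) :
    ∑ x with x i = b, exp (ham (msgGraph T i j) β (msgField T B i j) x) =
      exp (B i * spin b) * Fintype.card (V → Bool) /
          (2 * Fintype.card (V → Bool) ^ (T.neighborFinset i \ {j}).card) *
        ∏ k ∈ T.neighborFinset i \ {j},
          ∑ x, exp (β * (spin b * spin (x k)) + ham (msgGraph T k i) β (msgField T B k i) x) := by
  set N := T.neighborFinset i \ {j}
  let g (k : V) (x : V → Bool) : ℝ :=
    exp (β * (spin b * spin (x k)) + ham (msgGraph T k i) β (msgField T B k i) x)
  have hg : ∀ k ∈ N, DependsOn (g k) (branch T k i) := fun k _ x y hxy => by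
    have hH : ham (msgGraph T k i) β (msgField T B k i) x =
        ham (msgGraph T k i) β (msgField T B k i) y :=
      dependsOn_ham (G := msgGraph T k i) (fun _ _ h => h.2.1) (fun _ hv => if_neg hv) hxy
    simp only [g, hxy k mem_branch_self, hH]
  have hN : (N : Set V).PairwiseDisjoint fun k => branch T k i := fun k hk k' hk' hkk' => by
    rw [Finset.mem_coe, mem_neighborFinset_sdiff_singleton] at hk hk'
    exact disjoint_branch hT hk.1.symm hk'.1.symm hkk'
  have hi : DependsOn (fun x => ∏ k ∈ N, g k x) {i}ᶜ := by
    refine (DependsOn.finsetProd hg).mono fun v hv => ?_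
    simp only [Set.mem_iUnion] at hv
    obtain ⟨k, hk, hvk⟩ := hv
    rintro rfl
    exact notMem_branch hT (mem_neighborFinset_sdiff_singleton.mp hk).1.symm hvk
  have hn : (Fintype.card (V → Bool) : ℝ) ≠ 0 := Nat.cast_ne_zero.mpr Fintype.card_ne_zero
  calc ∑ x with x i = b, exp (ham (msgGraph T i j) β (msgField T B i j) x)
      = ∑ x with x i = b, exp (B i * spin b) * ∏ k ∈ N, g k x :=
        Finset.sum_congr rfl fun x hx => by
          rw [ham_msgGraph hT hij, (Finset.mem_filter.mp hx).2, exp_add, exp_sum]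
    _ = exp (B i * spin b) * (∑ x, ∏ k ∈ N, g k x) / 2 := by
        rw [← Finset.mul_sum, ← two_mul_sum_filter_eq_sum i hi b]
        ring
    _ = _ := by
        rw [← mul_div_mul_left _ _ (pow_ne_zero N.card hn), mul_left_comm,
          card_pow_mul_sum_prod_of_dependsOn N hg hN]
        ring

theorem exists_sum_filter_exp_ham_msgGraph_eq (hT : T.IsAcyclic) (hij : T.Adj i j) (β : ℝ)
    (B : V → ℝ) :
    ∃ c > 0, ∀ b : Bool, ∑ x with x i = b, exp (ham (msgGraph T i j) β (msgField T B i j) x) =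
      c * exp (spin b *
        (B i + ∑ k ∈ T.neighborFinset i \ {j}, atanh (tanh β * msg T β B k i))) := by
  set N := T.neighborFinset i \ {j}
  let Z (k : V) : ℝ := ∑ x, exp (ham (msgGraph T k i) β (msgField T B k i) x)
  let a (k : V) : ℝ := cosh β * Z k * √(1 - (tanh β * msg T β B k i) ^ 2)
  have ht (k : V) : |tanh β * msg T β B k i| < 1 := by
    rw [abs_mul]
    exact mul_lt_one_of_nonneg_of_lt_one_left (abs_nonneg _) (abs_tanh_lt_one β)
      (abs_isingExp_spin_le_one k)
  have ha (k : V) : 0 < a k := by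
    have : (tanh β * msg T β B k i) ^ 2 < 1 := (sq_lt_one_iff_abs_lt_one _).mpr (ht k)
    have : 0 < Z k := Finset.sum_pos (fun x _ => exp_pos _) Finset.univ_nonempty
    have := cosh_pos β
    positivity
  have hfactor (b : Bool) (k : V) :
      ∑ x, exp (β * (spin b * spin (x k)) + ham (msgGraph T k i) β (msgField T B k i) x) =
        a k * exp (spin b * atanh (tanh β * msg T β B k i)) := by
    rw [sum_exp_coupling_add_ham]
    change cosh β * Z k * (1 + spin b * (tanh β * msg T β B k i)) = _
    rw [one_add_spin_mul_eq (ht k)]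
    ring
  have hn : (0 : ℝ) < Fintype.card (V → Bool) := Nat.cast_pos.mpr Fintype.card_pos
  refine ⟨Fintype.card (V → Bool) / (2 * Fintype.card (V → Bool) ^ N.card) * ∏ k ∈ N, a k,
    mul_pos (by positivity) (Finset.prod_pos fun k _ => ha k), fun b => ?_⟩
  rw [sum_filter_exp_ham_msgGraph hT hij, Finset.prod_congr rfl fun k _ => hfactor b k,
    Finset.prod_mul_distrib, ← exp_sum, mul_add, exp_add, Finset.mul_sum, mul_comm (B i)]
  ring

end Recursion

theorem message_recursion_general (T : SimpleGraph V) (hT : T.IsTree)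
    (β : ℝ) (B : V → ℝ) (i j : V) (hij : T.Adj i j) :
    msg T β B i j =
      Real.tanh (B i + ∑ k ∈ T.neighborFinset i \ {j},
        atanh (Real.tanh β * msg T β B k i)) := by
  obtain ⟨c, hc, h⟩ := exists_sum_filter_exp_ham_msgGraph_eq hT.isAcyclic hij β B
  exact isingExp_spin_eq_tanh hc h

/-- **Message recursion on a finite tree.**  For every ordered pair of adjacent
vertices `(i,j)` of a finite tree `T`,
`m_{i→j} = tanh(B_i + Σ_{k ∈ ∂i \ {j}} atanh(tanh β · m_{k→i}))`. -/
theorem message_recursion (T : SimpleGraph V) (hT : T.IsTree)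
    (β : ℝ) (hβ : 0 ≤ β) (B : V → ℝ) (i j : V) (hij : T.Adj i j) :
    msg T β B i j =
      Real.tanh (B i + ∑ k ∈ T.neighborFinset i \ {j},
        atanh (Real.tanh β * msg T β B k i)) :=
  message_recursion_general T hT β B i j hij
end

section
/- Let n ≥ 1 and let a : Fin n × Fin n → ℝ satisfy a_{ij} ≥ 0, a_{ij} = a_{ji} for all i,j, and Σ_j a_{ij} = 1 for every i. Let x ∈ {−1,+1}^n with Σ_j x_j ≥ 0, and let η ≥ 0. Then the number of indices i with Σ_j x_j a_{ij} > −η is at least n·η/(1+η). -/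
/-! The row averages `f i = ∑ j, x j * a i j` are at most `1`, and since the columns of `a` also
sum to `1` they have total `∑ j, x j ≥ 0`. Splitting that total over the rows with `f i > -η`
(each contributing at most `1`) and the rest (each at most `-η`) gives `0 ≤ |S| - η (n - |S|)`. -/

open Finset

section

variable {ι : Type*} [Fintype ι]

theorem card_mul_le_card_filter_neg_lt_mul (f : ι → ℝ) (hf : ∀ i, f i ≤ 1)
    (hsum : 0 ≤ ∑ i, f i) (η : ℝ) :
    (Fintype.card ι : ℝ) * η ≤ (univ.filter fun i => -η < f i).card * (1 + η) := by
  classical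
  set S := univ.filter fun i => -η < f i
  have hS : ∑ i ∈ S, f i ≤ S.card := by
    simpa using sum_le_sum fun i (_ : i ∈ S) => hf i
  have hSc : ∑ i ∈ Sᶜ, f i ≤ Sᶜ.card * (-η) := by
    simpa [mul_comm] using sum_le_sum fun i (hi : i ∈ Sᶜ) => (by simpa [S] using hi : f i ≤ -η)
  have hcard : (Sᶜ.card : ℝ) = Fintype.card ι - S.card := by
    rw [card_compl, Nat.cast_sub (card_le_univ S)]
  rw [← sum_add_sum_compl S] at hsum
  rw [hcard] at hSc
  linarith

theorem sum_mul_le_one_of_sum_eq_one (x w : ι → ℝ) (hx : ∀ j, x j ≤ 1) (hw : ∀ j, 0 ≤ w j)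
    (hw1 : ∑ j, w j = 1) : ∑ j, x j * w j ≤ 1 :=
  calc ∑ j, x j * w j ≤ ∑ j, w j :=
        sum_le_sum fun j _ => mul_le_of_le_one_left (hw j) (hx j)
    _ = 1 := hw1

theorem sum_sum_mul_eq_sum_of_col_sum_eq_one (a : ι → ι → ℝ) (hcol : ∀ j, ∑ i, a i j = 1)
    (x : ι → ℝ) : ∑ i, ∑ j, x j * a i j = ∑ j, x j := by
  rw [sum_comm]
  exact sum_congr rfl fun j _ => by rw [← mul_sum, hcol, mul_one]

end

theorem occupation_average_lower_bound_general (n : ℕ)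
    (a : Fin n → Fin n → ℝ)
    (ha0 : ∀ i j, 0 ≤ a i j)
    (hasymm : ∀ i j, a i j = a j i)
    (harow : ∀ i, ∑ j, a i j = 1)
    (x : Fin n → ℝ) (hx : ∀ j, x j = 1 ∨ x j = -1)
    (hxsum : 0 ≤ ∑ j, x j)
    (η : ℝ) (hη : 0 ≤ η) :
    (n : ℝ) * η / (1 + η) ≤
      ((Finset.univ.filter (fun i => -η < ∑ j, x j * a i j)).card : ℝ) := by
  have hx1 : ∀ j, x j ≤ 1 := fun j => by rcases hx j with h | h <;> linarith
  have hcol : ∀ j, ∑ i, a i j = 1 := fun j => by simp_rw [hasymm _ j, harow]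
  have hbound := card_mul_le_card_filter_neg_lt_mul (fun i => ∑ j, x j * a i j)
    (fun i => sum_mul_le_one_of_sum_eq_one x (a i) hx1 (ha0 i) (harow i))
    (sum_sum_mul_eq_sum_of_col_sum_eq_one a hcol x ▸ hxsum) η
  rw [div_le_iff₀ (by linarith)]
  simpa using hbound

/-- **Occupation-measure averaging lemma.**
If `a` is a symmetric nonnegative `n × n` matrix with all row sums equal to `1`
and `x ∈ {-1,+1}^n` has `Σ_j x_j ≥ 0`, then for any `η ≥ 0` at least
`n·η/(1+η)` indices `i` satisfy `Σ_j x_j a_{ij} > -η`. -/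
theorem occupation_average_lower_bound (n : ℕ) (hn : 1 ≤ n)
    (a : Fin n → Fin n → ℝ)
    (ha0 : ∀ i j, 0 ≤ a i j)
    (hasymm : ∀ i j, a i j = a j i)
    (harow : ∀ i, ∑ j, a i j = 1)
    (x : Fin n → ℝ) (hx : ∀ j, x j = 1 ∨ x j = -1)
    (hxsum : 0 ≤ ∑ j, x j)
    (η : ℝ) (hη : 0 ≤ η) :
    (n : ℝ) * η / (1 + η) ≤
      ((Finset.univ.filter (fun i => -η < ∑ j, x j * a i j)).card : ℝ) :=
  occupation_average_lower_bound_general n a ha0 hasymm harow x hx hxsum η hη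
end

section
/- Let T = (V,E) be a finite tree, β ≥ 0, and B : V → ℝ with B_v ≥ 0 for all v, and let ν be the Ising measure on T with parameters β, B. Then for all vertices v, w ∈ V, 0 ≤ ⟨x_v·x_w⟩_ν − ⟨x_v⟩_ν⟨x_w⟩_ν ≤ (tanh β)^{d(v,w)}, where d(v,w) is the graph distance in T. -/
/-!
Prune a leaf `u` of the tree, with unique neighbour `p`. Summing out `x_u` produces the weight
`2 cosh (β x_p + B_u)`, which as a function of `x_p = ±1` is `C e^{δ x_p}`; so the other spins
follow the Ising measure of the pruned tree with the field at `p` raised by `δ`, and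
`⟨x_u | rest⟩ = tanh (β x_p + B_u) = a + b x_p` with `0 ≤ b ≤ tanh β`. Hence pruning a leaf off
the path from `v` to `w` leaves `Cov (x_v, x_w)` unchanged, while pruning `v` itself multiplies it
by `b` and shortens the path by one edge. The induction ends at `Var x_v = 1 - ⟨x_v⟩² ∈ [0, 1]`.
-/

open Real Finset

attribute [local instance] Classical.propDecidable

variable {V : Type} [Fintype V]

lemma abs_spin (b : Bool) : |spin b| = 1 := by cases b <;> simp [spin]

lemma spin_mul_self (b : Bool) : spin b * spin b = 1 := by cases b <;> simp [spin]

lemma spin_update_of_ne {W : Type*} {u v : W} (h : v ≠ u) (x : W → Bool) (s : Bool) :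
    spin (Function.update x u s v) = spin (x v) := by
  rw [Function.update_of_ne h]

lemma eq_add_mul_spin (φ : Bool → ℝ) (s : Bool) :
    φ s = (φ true + φ false) / 2 + (φ true - φ false) / 2 * spin s := by
  cases s <;> simp [spin] <;> ring

lemma sum_bool_exp_spin_mul (t : ℝ) : ∑ s : Bool, exp (spin s * t) = 2 * cosh t := by
  simp [spin, cosh_eq]; ring

lemma sum_bool_spin_mul_exp_spin_mul (t : ℝ) :
    ∑ s : Bool, spin s * exp (spin s * t) = 2 * sinh t := by
  simp [spin, sinh_eq]; ring

lemma sum_sum_update (u : V) (F : (V → Bool) → ℝ) :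
    ∑ x, ∑ s, F (Function.update x u s) = 2 * ∑ x, F x := by
  have hflip : Function.Involutive fun x : V → Bool => Function.update x u (!x u) := by
    intro x; simp
  have hpair : ∀ x, ∑ s, F (Function.update x u s) = F x + F (Function.update x u (!x u)) := by
    intro x
    have key : ∀ b, ∑ s, F (Function.update x u s)
        = F (Function.update x u b) + F (Function.update x u (!b)) := by
      intro b; cases b <;> simp [add_comm]
    rw [key (x u), Function.update_eq_self]
  rw [sum_congr rfl fun x _ => hpair x, sum_add_distrib,
    Fintype.sum_bijective _ hflip.bijective (fun x => F (Function.update x u (!x u))) F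
      fun _ => rfl]
  ring

lemma sum_eq_sum_of_sum_update_eq (u : V) {F G : (V → Bool) → ℝ}
    (h : ∀ x, ∑ s, F (Function.update x u s) = ∑ s, G (Function.update x u s)) :
    ∑ x, F x = ∑ x, G x := by
  have hF := sum_sum_update u F
  rw [funext h, sum_sum_update u G] at hF
  linarith

lemma sum_edgeFinset_eq_add_sum_deleteEdges {W M : Type*} [AddCommMonoid M] {G : SimpleGraph W}
    [Fintype G.edgeSet] {e : Sym2 W} [hfin : Fintype (G.deleteEdges {e}).edgeSet]
    (he : e ∈ G.edgeSet) (φ : Sym2 W → M) :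
    ∑ e' ∈ G.edgeFinset, φ e' = φ e + ∑ e' ∈ (G.deleteEdges {e}).edgeFinset, φ e' := by
  rw [← sum_insert (s := (G.deleteEdges {e}).edgeFinset) (by simp)]
  congr 1
  ext e'; by_cases he' : e' = e <;> simp [he', he]

lemma ham_eq_ham_deleteEdges_add {G : SimpleGraph V} {u p : V} (h : G.Adj u p) (β : ℝ)
    (B : V → ℝ) (x : V → Bool) :
    ham G β B x = ham (G.deleteEdges {s(u, p)}) β B x + β * (spin (x u) * spin (x p)) := by
  unfold ham
  -- `ham` unfolds to the classical `DecidableRel`, not the instance found for `deleteEdges`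
  rw [sum_edgeFinset_eq_add_sum_deleteEdges (e := s(u, p))
    (hfin := @SimpleGraph.fintypeEdgeSet _ _ _ fun _ _ => Classical.propDecidable _) h]
  simp only [edgeTerm, Sym2.lift_mk]
  ring

lemma ham_update_of_forall_not_adj {H : SimpleGraph V} {u : V} (hu : ∀ q, ¬ H.Adj u q)
    (β : ℝ) (B : V → ℝ) (x : V → Bool) (s : Bool) :
    ham H β B (Function.update x u s) = ham H β B x + B u * (spin s - spin (x u)) := by
  have hedge : ∀ e ∈ H.edgeFinset, edgeTerm (Function.update x u s) e = edgeTerm x e := by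
    intro e he
    induction e using Sym2.ind with
    | _ i j =>
      have hij : H.Adj i j := by simpa using he
      have hi : i ≠ u := fun hi => hu j (hi ▸ hij)
      have hj : j ≠ u := fun hj => hu i (hj ▸ hij.symm)
      simp [edgeTerm, hi, hj]
  have hfield : ∑ v ∈ univ.erase u, B v * spin (Function.update x u s v)
      = ∑ v ∈ univ.erase u, B v * spin (x v) :=
    sum_congr rfl fun v hv => by rw [spin_update_of_ne (ne_of_mem_erase hv)]
  unfold ham
  rw [sum_congr rfl hedge, ← add_sum_erase _ _ (mem_univ u), ← add_sum_erase _ _ (mem_univ u),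
    hfield, Function.update_self]
  ring

lemma ham_update_field (H : SimpleGraph V) (β : ℝ) (B : V → ℝ) (p : V) (δ : ℝ)
    (x : V → Bool) :
    ham H β (Function.update B p (B p + δ)) x = ham H β B x + δ * spin (x p) := by
  have hB : Function.update B p (B p + δ) = fun v => B v + if v = p then δ else 0 := by
    ext v; by_cases hv : v = p <;> simp [hv]
  simp [ham, hB, add_mul, sum_add_distrib, ite_mul]
  ring

lemma exists_cosh_mul_spin_add_eq (β h : ℝ) :
    ∃ c δ : ℝ, ∀ s, cosh (β * spin s + h) = c * exp (δ * spin s) := by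
  refine ⟨exp ((log (cosh (β + h)) + log (cosh (-β + h))) / 2),
    (log (cosh (β + h)) - log (cosh (-β + h))) / 2, fun s => ?_⟩
  rw [← exp_add, ← exp_log (cosh_pos (β * spin s + h)),
    eq_add_mul_spin (fun s => log (cosh (β * spin s + h))) s]
  simp [spin]

lemma ne_zero_of_cosh_mul_spin_add_eq {β h c δ : ℝ}
    (hcδ : ∀ s, cosh (β * spin s + h) = c * exp (δ * spin s)) : c ≠ 0 := by
  rintro rfl
  simpa [(cosh_pos _).ne'] using hcδ true

noncomputable def leafResponse (β h : ℝ) : ℝ := (tanh (β + h) - tanh (-β + h)) / 2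

lemma tanh_mul_spin_add (β h : ℝ) (s : Bool) :
    tanh (β * spin s + h) = (tanh (β + h) + tanh (-β + h)) / 2 + leafResponse β h * spin s := by
  rw [eq_add_mul_spin (fun s => tanh (β * spin s + h)) s]
  simp [spin, leafResponse]

lemma tanh_nonneg {β : ℝ} (hβ : 0 ≤ β) : 0 ≤ tanh β := by
  rw [tanh_eq_sinh_div_cosh]
  exact div_nonneg (sinh_nonneg_iff.2 hβ) (cosh_pos β).le

lemma leafResponse_eq (β h : ℝ) :
    leafResponse β h = sinh β * cosh β / (cosh h ^ 2 + sinh β ^ 2) := by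
  have h1 := cosh_pos (β + h)
  have h2 := cosh_pos (-β + h)
  have hD : cosh (β + h) * cosh (-β + h) = cosh h ^ 2 + sinh β ^ 2 := by
    rw [cosh_add, cosh_add, cosh_neg, sinh_neg]
    linear_combination cosh h ^ 2 * cosh_sq β + sinh β ^ 2 * cosh_sq h
  rw [leafResponse, tanh_eq_sinh_div_cosh, tanh_eq_sinh_div_cosh, div_sub_div _ _ h1.ne' h2.ne',
    ← sinh_sub, hD, show β + h - (-β + h) = 2 * β by ring, sinh_two_mul]
  field_simp

lemma leafResponse_nonneg {β : ℝ} (hβ : 0 ≤ β) (h : ℝ) : 0 ≤ leafResponse β h := by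
  rw [leafResponse_eq]
  have := sinh_nonneg_iff.2 hβ
  have := cosh_pos β
  positivity

lemma leafResponse_le_tanh {β : ℝ} (hβ : 0 ≤ β) (h : ℝ) :
    leafResponse β h ≤ tanh β := by
  have hs := sinh_nonneg_iff.2 hβ
  have hh : 1 ≤ cosh h ^ 2 := by nlinarith [one_le_cosh h]
  rw [leafResponse_eq, tanh_eq_sinh_div_cosh, div_le_div_iff₀ (by positivity) (cosh_pos β)]
  linear_combination sinh β * cosh_sq β + mul_nonneg hs (sub_nonneg.2 hh)

noncomputable def isingCov (G : SimpleGraph V) (β : ℝ) (B : V → ℝ)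
    (f g : (V → Bool) → ℝ) : ℝ :=
  isingExp G β B (fun x => f x * g x) - isingExp G β B f * isingExp G β B g

section Expectation

variable (G : SimpleGraph V) (β : ℝ) (B : V → ℝ)

lemma sum_exp_ham_pos : 0 < ∑ x : V → Bool, exp (ham G β B x) :=
  sum_pos (fun _ _ => exp_pos _) univ_nonempty

lemma isingExp_add (f g : (V → Bool) → ℝ) :
    isingExp G β B (fun x => f x + g x) = isingExp G β B f + isingExp G β B g := by
  simp only [isingExp, add_mul, sum_add_distrib, add_div]

lemma isingExp_const_mul (a : ℝ) (f : (V → Bool) → ℝ) :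
    isingExp G β B (fun x => a * f x) = a * isingExp G β B f := by
  simp only [isingExp, mul_assoc, ← mul_sum, mul_div_assoc]

lemma isingExp_const (a : ℝ) : isingExp G β B (fun _ => a) = a := by
  rw [isingExp, ← mul_sum, mul_div_assoc, div_self (sum_exp_ham_pos G β B).ne', mul_one]

lemma abs_isingExp_le_one {f : (V → Bool) → ℝ} (hf : ∀ x, |f x| ≤ 1) :
    |isingExp G β B f| ≤ 1 := by
  rw [isingExp, abs_div, abs_of_pos (sum_exp_ham_pos G β B), div_le_one (sum_exp_ham_pos G β B)]
  refine (abs_sum_le_sum_abs _ _).trans (sum_le_sum fun x _ => ?_)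
  rw [abs_mul, abs_of_pos (exp_pos _)]
  exact mul_le_of_le_one_left (exp_pos _).le (hf x)

lemma isingCov_comm (f g : (V → Bool) → ℝ) : isingCov G β B f g = isingCov G β B g f := by
  simp only [isingCov, mul_comm]

lemma isingCov_const_add_mul (f g : (V → Bool) → ℝ) (a b : ℝ) :
    isingCov G β B f (fun x => a + b * g x) = b * isingCov G β B f g := by
  have hfg : (fun x => f x * (a + b * g x)) = fun x => a * f x + b * (f x * g x) := by
    ext x; ring
  rw [isingCov, isingCov, hfg, isingExp_add, isingExp_const_mul, isingExp_const_mul,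
    isingExp_add, isingExp_const, isingExp_const_mul]
  ring

lemma isingCov_spin_self_mem_Icc (v : V) :
    isingCov G β B (fun x => spin (x v)) (fun x => spin (x v)) ∈ Set.Icc 0 1 := by
  have hsq : isingExp G β B (fun x => spin (x v) * spin (x v)) = 1 := by
    simp only [spin_mul_self, isingExp_const]
  have habs := abs_le.1 (abs_isingExp_le_one G β B (f := fun x => spin (x v))
    fun x => (abs_spin _).le)
  rw [isingCov, hsq]
  constructor <;> nlinarith

end Expectation

namespace SimpleGraph

variable {W : Type*} {G : SimpleGraph W}

lemma not_adj_deleteEdges_of_leaf {u p : W} (hleaf : ∀ q, G.Adj u q ↔ q = p) (q : W) :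
    ¬ (G.deleteEdges {s(u, p)}).Adj u q := by
  rw [deleteEdges_adj]
  rintro ⟨hq, hne⟩
  exact hne (by rw [(hleaf q).1 hq]; rfl)

lemma deleteEdges_leaf_lt {u p : W} (hleaf : ∀ q, G.Adj u q ↔ q = p) :
    G.deleteEdges {s(u, p)} < G :=
  (G.deleteEdges_le _).lt_of_ne fun h =>
    not_adj_deleteEdges_of_leaf hleaf p (by rw [h]; exact (hleaf p).2 rfl)

-- A longest path starts at a leaf: a neighbour off the path would extend it, and by
-- acyclicity the only neighbour on it is its second vertex.
lemma IsAcyclic.exists_leaf [Fintype W] (hG : G.IsAcyclic) {a b : W} (hab : G.Adj a b) :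
    ∃ u p, ∀ q, G.Adj u q ↔ q = p := by
  obtain ⟨⟨u, w, q⟩, -, hmax⟩ := exists_max_image (univ : Finset (Σ u w, G.Path u w))
    (fun P => P.2.2.1.length) ⟨⟨a, b, Path.singleton hab⟩, mem_univ _⟩
  have hlen : 1 ≤ q.1.length := by simpa using hmax ⟨a, b, Path.singleton hab⟩ (mem_univ _)
  have hnil : ¬ q.1.Nil := fun h => by simp [h.length_eq_zero] at hlen
  refine ⟨u, q.1.snd, fun c => ⟨fun hc => ?_, fun hc => hc ▸ q.1.adj_snd hnil⟩⟩
  by_cases hcq : c ∈ q.1.support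
  · exact hG.eq_snd_of_adj_start q.2 hc hcq
  · have hcons := (Walk.cons_isPath_iff hc.symm q.1).2 ⟨q.2, hcq⟩
    simpa using hmax ⟨c, w, ⟨_, hcons⟩⟩ (mem_univ _)

lemma Walk.IsPath.notMem_support_of_leaf {u p v w : W} {q : G.Walk v w} (hq : q.IsPath)
    (hleaf : ∀ q, G.Adj u q ↔ q = p) (hv : u ≠ v) (hw : u ≠ w) : u ∉ q.support := by
  intro hu
  obtain ⟨n, rfl, hn⟩ := Walk.mem_support_iff_exists_getVert.1 hu
  have h0 : n ≠ 0 := by rintro rfl; exact hv q.getVert_zero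
  have hlen : n ≠ q.length := by rintro rfl; exact hw q.getVert_length
  have hprev := q.adj_getVert_succ (i := n - 1) (by omega)
  have hnext := q.adj_getVert_succ (i := n) (by omega)
  rw [Nat.sub_add_cancel (Nat.one_le_iff_ne_zero.2 h0)] at hprev
  have := hq.getVert_injOn (show n - 1 ≤ q.length by omega) (show n + 1 ≤ q.length by omega)
    (((hleaf _).1 hprev.symm).trans ((hleaf _).1 hnext).symm)
  omega

lemma Walk.IsPath.exists_isPath_deleteEdges_of_notMem_support {u p v w : W} {q : G.Walk v w}
    (hq : q.IsPath) (hu : u ∉ q.support) :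
    ∃ r : (G.deleteEdges {s(u, p)}).Walk v w, r.IsPath ∧ r.length = q.length :=
  ⟨q.toDeleteEdge s(u, p) fun he => hu (q.fst_mem_support_of_mem_edges he),
    hq.toDeleteEdges _ _ _, q.length_transfer _⟩

end SimpleGraph

section Leaf

variable {G : SimpleGraph V} {u p : V} {β c δ : ℝ} {B : V → ℝ}

lemma ham_update_leaf (hleaf : ∀ q, G.Adj u q ↔ q = p) (x : V → Bool) (s : Bool) :
    ham G β B (Function.update x u s) = ham (G.deleteEdges {s(u, p)}) β B x - B u * spin (x u)
      + spin s * (β * spin (x p) + B u) := by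
  have hadj := (hleaf p).2 rfl
  rw [ham_eq_ham_deleteEdges_add hadj,
    ham_update_of_forall_not_adj (SimpleGraph.not_adj_deleteEdges_of_leaf hleaf),
    Function.update_self, spin_update_of_ne hadj.ne.symm]
  ring

lemma ham_deleteEdges_update_leaf (hleaf : ∀ q, G.Adj u q ↔ q = p) (x : V → Bool) (s : Bool) :
    ham (G.deleteEdges {s(u, p)}) β (Function.update B p (B p + δ)) (Function.update x u s)
      = ham (G.deleteEdges {s(u, p)}) β B x - B u * spin (x u) + δ * spin (x p)
        + spin s * B u := by
  rw [ham_update_field,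
    ham_update_of_forall_not_adj (SimpleGraph.not_adj_deleteEdges_of_leaf hleaf),
    spin_update_of_ne ((hleaf p).2 rfl).ne.symm]
  ring

lemma sum_bool_exp_ham_leaf (hleaf : ∀ q, G.Adj u q ↔ q = p)
    (hcδ : ∀ s, cosh (β * spin s + B u) = c * exp (δ * spin s)) (x : V → Bool) :
    ∑ s, exp (ham G β B (Function.update x u s)) = c / cosh (B u) *
      ∑ s, exp (ham (G.deleteEdges {s(u, p)}) β (Function.update B p (B p + δ))
        (Function.update x u s)) := by
  simp only [ham_update_leaf hleaf, ham_deleteEdges_update_leaf hleaf, exp_add, ← mul_sum,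
    sum_bool_exp_spin_mul, hcδ]
  field_simp [(cosh_pos (B u)).ne']

lemma sum_bool_spin_mul_exp_ham_leaf (hleaf : ∀ q, G.Adj u q ↔ q = p)
    (hcδ : ∀ s, cosh (β * spin s + B u) = c * exp (δ * spin s)) (x : V → Bool) :
    ∑ s, spin s * exp (ham G β B (Function.update x u s)) =
      c / cosh (B u) * tanh (β * spin (x p) + B u) *
        ∑ s, exp (ham (G.deleteEdges {s(u, p)}) β (Function.update B p (B p + δ))
          (Function.update x u s)) := by
  have hc := ne_zero_of_cosh_mul_spin_add_eq hcδ
  simp only [ham_update_leaf hleaf, ham_deleteEdges_update_leaf hleaf, exp_add,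
    mul_left_comm (spin _), ← mul_sum, sum_bool_exp_spin_mul, sum_bool_spin_mul_exp_spin_mul,
    tanh_eq_sinh_div_cosh, hcδ]
  field_simp [(cosh_pos (B u)).ne']

lemma sum_mul_exp_ham_leaf (hleaf : ∀ q, G.Adj u q ↔ q = p)
    (hcδ : ∀ s, cosh (β * spin s + B u) = c * exp (δ * spin s)) {f : (V → Bool) → ℝ}
    (hf : ∀ x s, f (Function.update x u s) = f x) :
    ∑ x, f x * exp (ham G β B x) = c / cosh (B u) *
      ∑ x, f x * exp (ham (G.deleteEdges {s(u, p)}) β (Function.update B p (B p + δ)) x) := by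
  rw [mul_sum]
  refine sum_eq_sum_of_sum_update_eq u fun x => ?_
  simp only [hf, ← mul_sum, sum_bool_exp_ham_leaf hleaf hcδ]
  ring

lemma sum_mul_spin_mul_exp_ham_leaf (hleaf : ∀ q, G.Adj u q ↔ q = p)
    (hcδ : ∀ s, cosh (β * spin s + B u) = c * exp (δ * spin s)) {f : (V → Bool) → ℝ}
    (hf : ∀ x s, f (Function.update x u s) = f x) :
    ∑ x, f x * spin (x u) * exp (ham G β B x) = c / cosh (B u) *
      ∑ x, f x * tanh (β * spin (x p) + B u) *
        exp (ham (G.deleteEdges {s(u, p)}) β (Function.update B p (B p + δ)) x) := by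
  rw [mul_sum]
  refine sum_eq_sum_of_sum_update_eq u fun x => ?_
  simp only [hf, Function.update_self, spin_update_of_ne ((hleaf p).2 rfl).ne.symm, mul_assoc,
    ← mul_sum, sum_bool_spin_mul_exp_ham_leaf hleaf hcδ]
  ring

lemma isingExp_leaf (hleaf : ∀ q, G.Adj u q ↔ q = p)
    (hcδ : ∀ s, cosh (β * spin s + B u) = c * exp (δ * spin s)) {f : (V → Bool) → ℝ}
    (hf : ∀ x s, f (Function.update x u s) = f x) :
    isingExp G β B f =
      isingExp (G.deleteEdges {s(u, p)}) β (Function.update B p (B p + δ)) f := by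
  have hZ := sum_mul_exp_ham_leaf hleaf hcδ (f := fun _ => 1) fun _ _ => rfl
  simp only [one_mul] at hZ
  rw [isingExp, isingExp, sum_mul_exp_ham_leaf hleaf hcδ hf, hZ,
    mul_div_mul_left _ _ (div_ne_zero (ne_zero_of_cosh_mul_spin_add_eq hcδ) (cosh_pos _).ne')]

lemma isingExp_mul_spin_leaf (hleaf : ∀ q, G.Adj u q ↔ q = p)
    (hcδ : ∀ s, cosh (β * spin s + B u) = c * exp (δ * spin s)) {f : (V → Bool) → ℝ}
    (hf : ∀ x s, f (Function.update x u s) = f x) :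
    isingExp G β B (fun x => f x * spin (x u)) =
      isingExp (G.deleteEdges {s(u, p)}) β (Function.update B p (B p + δ))
        (fun x => f x * tanh (β * spin (x p) + B u)) := by
  have hZ := sum_mul_exp_ham_leaf hleaf hcδ (f := fun _ => 1) fun _ _ => rfl
  simp only [one_mul] at hZ
  rw [isingExp, isingExp, sum_mul_spin_mul_exp_ham_leaf hleaf hcδ hf, hZ,
    mul_div_mul_left _ _ (div_ne_zero (ne_zero_of_cosh_mul_spin_add_eq hcδ) (cosh_pos _).ne')]

lemma isingCov_leaf (hleaf : ∀ q, G.Adj u q ↔ q = p)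
    (hcδ : ∀ s, cosh (β * spin s + B u) = c * exp (δ * spin s)) {f g : (V → Bool) → ℝ}
    (hf : ∀ x s, f (Function.update x u s) = f x)
    (hg : ∀ x s, g (Function.update x u s) = g x) :
    isingCov G β B f g =
      isingCov (G.deleteEdges {s(u, p)}) β (Function.update B p (B p + δ)) f g := by
  simp only [isingCov, isingExp_leaf hleaf hcδ hf, isingExp_leaf hleaf hcδ hg,
    isingExp_leaf hleaf hcδ (f := fun x => f x * g x) fun x s => by rw [hf, hg]]

lemma isingCov_spin_leaf (hleaf : ∀ q, G.Adj u q ↔ q = p)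
    (hcδ : ∀ s, cosh (β * spin s + B u) = c * exp (δ * spin s)) {f : (V → Bool) → ℝ}
    (hf : ∀ x s, f (Function.update x u s) = f x) :
    isingCov G β B f (fun x => spin (x u)) =
      leafResponse β (B u) *
        isingCov (G.deleteEdges {s(u, p)}) β (Function.update B p (B p + δ)) f
          (fun x => spin (x p)) := by
  have hu := isingExp_mul_spin_leaf hleaf hcδ (f := fun _ => 1) fun _ _ => rfl
  simp only [one_mul] at hu
  have htanh : isingCov G β B f (fun x => spin (x u)) =
      isingCov (G.deleteEdges {s(u, p)}) β (Function.update B p (B p + δ)) f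
        (fun x => tanh (β * spin (x p) + B u)) := by
    rw [isingCov, isingCov, isingExp_mul_spin_leaf hleaf hcδ hf, isingExp_leaf hleaf hcδ hf, hu]
  simp only [htanh, tanh_mul_spin_add, isingCov_const_add_mul]

end Leaf

theorem isingCov_spin_mem_Icc_of_isPath {β : ℝ} (hβ : 0 ≤ β) {G : SimpleGraph V}
    (hG : G.IsAcyclic) (B : V → ℝ) {v w : V} {q : G.Walk v w} (hq : q.IsPath) :
    isingCov G β B (fun x => spin (x v)) (fun x => spin (x w)) ∈
      Set.Icc 0 (tanh β ^ q.length) := by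
  induction G using WellFoundedLT.induction generalizing B v w with
  | ind G ih =>
  rcases eq_or_ne v w with rfl | hvw
  · rw [(SimpleGraph.Walk.isPath_iff_nil.1 hq).length_eq_zero]
    simpa using isingCov_spin_self_mem_Icc G β B v
  obtain ⟨u, p, hleaf⟩ := hG.exists_leaf (q.adj_snd (q.not_nil_of_ne hvw))
  obtain ⟨c, δ, hcδ⟩ := exists_cosh_mul_spin_add_eq β (B u)
  have ih' {v w : V} {r : (G.deleteEdges {s(u, p)}).Walk v w} (hr : r.IsPath) :
      isingCov (G.deleteEdges {s(u, p)}) β (Function.update B p (B p + δ))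
        (fun x => spin (x v)) (fun x => spin (x w)) ∈ Set.Icc 0 (tanh β ^ r.length) :=
    ih _ (SimpleGraph.deleteEdges_leaf_lt hleaf) (hG.anti (G.deleteEdges_le _))
      (Function.update B p (B p + δ)) hr
  by_cases hend : u = v ∨ u = w
  · wlog huv : u = v generalizing v w
    · rw [isingCov_comm, ← q.length_reverse]
      exact this hq.reverse hvw.symm hend.symm (hend.resolve_left huv)
    subst huv
    cases q with
    | nil => contradiction
    | cons h r =>
    obtain ⟨hr, hur⟩ := (SimpleGraph.Walk.cons_isPath_iff h r).1 hq
    obtain rfl : p = _ := ((hleaf _).1 h).symm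
    obtain ⟨r', hr', hlen⟩ := hr.exists_isPath_deleteEdges_of_notMem_support hur
    obtain ⟨h0, h1⟩ := hlen ▸ ih' hr'
    rw [isingCov_comm, isingCov_spin_leaf hleaf hcδ (spin_update_of_ne hvw.symm),
      isingCov_comm, SimpleGraph.Walk.length_cons, pow_succ']
    exact ⟨mul_nonneg (leafResponse_nonneg hβ _) h0,
      mul_le_mul (leafResponse_le_tanh hβ _) h1 h0 (tanh_nonneg hβ)⟩
  · obtain ⟨hv, hw⟩ := not_or.1 hend
    obtain ⟨r, hr, hlen⟩ := hq.exists_isPath_deleteEdges_of_notMem_support (p := p)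
      (hq.notMem_support_of_leaf hleaf hv hw)
    rw [isingCov_leaf hleaf hcδ (spin_update_of_ne (Ne.symm hv)) (spin_update_of_ne (Ne.symm hw)),
      ← hlen]
    exact ih' hr

theorem ising_correlation_decay_general (T : SimpleGraph V) (hT : T.IsTree)
    (β : ℝ) (hβ : 0 ≤ β) (B : V → ℝ) (v w : V) :
    0 ≤ isingExp T β B (fun x => spin (x v) * spin (x w)) -
          isingExp T β B (fun x => spin (x v)) * isingExp T β B (fun x => spin (x w)) ∧
      isingExp T β B (fun x => spin (x v) * spin (x w)) -
          isingExp T β B (fun x => spin (x v)) * isingExp T β B (fun x => spin (x w)) ≤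
        (Real.tanh β) ^ (T.dist v w) := by
  obtain ⟨q, hq, hlen⟩ := hT.connected.exists_path_of_dist v w
  rw [← hlen]
  exact isingCov_spin_mem_Icc_of_isPath hβ hT.isAcyclic B hq

/-- **Uniform correlation decay on trees.**  For a finite tree `T`, `β ≥ 0` and
nonnegative external fields `B`, the covariance of any two spins satisfies
`0 ≤ ⟨x_v x_w⟩ - ⟨x_v⟩⟨x_w⟩ ≤ (tanh β)^{d(v,w)}`. -/
theorem ising_correlation_decay (T : SimpleGraph V) (hT : T.IsTree)
    (β : ℝ) (hβ : 0 ≤ β) (B : V → ℝ) (hB : ∀ v, 0 ≤ B v) (v w : V) :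
    0 ≤ isingExp T β B (fun x => spin (x v) * spin (x w)) -
          isingExp T β B (fun x => spin (x v)) * isingExp T β B (fun x => spin (x w)) ∧
      isingExp T β B (fun x => spin (x v) * spin (x w)) -
          isingExp T β B (fun x => spin (x v)) * isingExp T β B (fun x => spin (x w)) ≤
        (Real.tanh β) ^ (T.dist v w) :=
  ising_correlation_decay_general T hT β hβ B v w
end

section
/- Let (Ω, F, P) be a probability space, Δ : Ω → [0,∞) an integrable random variable, and (ρ_l)_{l∈ℕ} a sequence of measurable real-valued functions on Ω. For η > 0 define 𝔈(η) := liminf_{ε→0⁺} liminf_{l→∞} E[ Δ · 1{ρ_l ∈ [2η−ε, 2η+ε)} ]. Then for every positive integer K the set {η > 0 : 𝔈(η) ≥ 1/K} has at most 2·E[Δ]·K elements; in particular, the set {η > 0 : 𝔈(η) > 0} is countable. -/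
open MeasureTheory Filter

/-!
Once `ε` is below half the smallest gap between finitely many levels, the windows
`[2η - ε, 2η + ε)` are pairwise disjoint, so for every `l` the masses `E[Δ; ρ_l ∈ window]`
sum to at most `E[Δ]`. Liminf is superadditive on bounded nonnegative families, so this bound
survives both liminfs: `∑_{η ∈ s} 𝔈(η) ≤ E[Δ]` for every finite `s`. Hence at most
`K·E[Δ]` levels have `𝔈 ≥ 1/K`, and `{𝔈 > 0}` is a countable union of finite sets.
-/

theorem Set.finite_of_forall_finset_card_le {α : Type*} {s : Set α} (n : ℕ)
    (h : ∀ t : Finset α, ↑t ⊆ s → t.card ≤ n) : s.Finite := by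
  by_contra hs
  obtain ⟨t, hts, htcard⟩ := Set.Infinite.exists_subset_card_eq hs (n + 1)
  have := h t hts
  omega

section Liminf

variable {ι α : Type*} {f : Filter α} {u : ι → α → ℝ} {B : ℝ}

theorem Finset.sum_liminf_le_liminf_sum [f.NeBot] (s : Finset ι) (h0 : ∀ i x, 0 ≤ u i x)
    (hB : ∀ i x, u i x ≤ B) :
    ∑ i ∈ s, liminf (u i) f ≤ liminf (fun x => ∑ i ∈ s, u i x) f := by
  induction s using Finset.cons_induction with
  | empty => simp
  | cons a t ha ih =>
    have hsum_bdd : ∀ x, ∑ i ∈ t, u i x ≤ t.card * B := fun x => by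
      simpa using Finset.sum_le_sum fun i _ => hB i x
    calc ∑ i ∈ Finset.cons a t ha, liminf (u i) f
        ≤ liminf (u a) f + liminf (fun x => ∑ i ∈ t, u i x) f := by
          rw [Finset.sum_cons]; gcongr
      _ ≤ liminf (u a + fun x => ∑ i ∈ t, u i x) f :=
          le_liminf_add (isBoundedUnder_of ⟨0, h0 a⟩) (isBoundedUnder_of ⟨B, hB a⟩)
            (isBoundedUnder_of ⟨0, fun x => Finset.sum_nonneg fun i _ => h0 i x⟩)
            (isCoboundedUnder_ge_of_le f hsum_bdd)
      _ = liminf (fun x => ∑ i ∈ Finset.cons a t ha, u i x) f := by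
          simp only [Finset.sum_cons]; rfl

theorem Finset.sum_liminf_le_of_eventually_sum_le [f.NeBot] (s : Finset ι) {M : ℝ}
    (h0 : ∀ i x, 0 ≤ u i x) (hB : ∀ i x, u i x ≤ B)
    (hM : ∀ᶠ x in f, ∑ i ∈ s, u i x ≤ M) :
    ∑ i ∈ s, liminf (u i) f ≤ M :=
  (s.sum_liminf_le_liminf_sum h0 hB).trans <| liminf_le_of_frequently_le hM.frequently
    (isBoundedUnder_of ⟨0, fun x => Finset.sum_nonneg fun i _ => h0 i x⟩)

end Liminf

theorem Finset.eventually_nhdsGT_pairwiseDisjoint_Ico (s : Finset ℝ) :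
    ∀ᶠ ε in nhdsWithin 0 (Set.Ioi 0),
      (s : Set ℝ).PairwiseDisjoint fun a => Set.Ico (a - ε) (a + ε) := by
  simp only [Set.PairwiseDisjoint, Set.Pairwise, Finset.mem_coe, eventually_all_finset]
  intro a _ b _
  by_cases hab : a = b
  · exact Eventually.of_forall fun _ h => absurd hab h
  have hpos : 0 < |a - b| / 2 := by positivity
  filter_upwards [nhdsWithin_le_nhds (eventually_lt_nhds hpos)] with ε hε _
  refine Set.disjoint_left.2 fun x hxa hxb => ?_
  simp only [Set.mem_Ico] at hxa hxb
  have : |a - b| < 2 * ε := abs_sub_lt_iff.2 ⟨by linarith, by linarith⟩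
  linarith

section Windows

variable {Ω : Type*} [MeasurableSpace Ω] {P : Measure Ω} {Δ : Ω → ℝ}

theorem sum_integral_indicator_le_integral {ι : Type*} {s : Finset ι} {S : ι → Set Ω}
    (hS : ∀ i ∈ s, MeasurableSet (S i)) (hd : (s : Set ι).PairwiseDisjoint S)
    (hΔ0 : 0 ≤ᵐ[P] Δ) (hΔ : Integrable Δ P) :
    ∑ i ∈ s, ∫ ω, (S i).indicator Δ ω ∂P ≤ ∫ ω, Δ ω ∂P := by
  rw [Finset.sum_congr rfl fun i hi => integral_indicator (hS i hi),
    ← integral_biUnion_finset s hS hd fun i _ => hΔ.integrableOn]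
  exact setIntegral_le_integral hΔ hΔ0

/-- The inner liminf in `𝔈`, for the window centred at `a = 2η`. -/
noncomputable def bandMass (P : Measure Ω) (Δ : Ω → ℝ) (ρ : ℕ → Ω → ℝ) (a ε : ℝ) : ℝ :=
  liminf (fun l => ∫ ω, {ω' | ρ l ω' ∈ Set.Ico (a - ε) (a + ε)}.indicator Δ ω ∂P) atTop

variable (hΔ0 : ∀ ω, 0 ≤ Δ ω) (hΔ : Integrable Δ P) {ρ : ℕ → Ω → ℝ}
include hΔ0 hΔ

theorem integral_indicator_mem_Icc (S : Set Ω) :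
    ∫ ω, S.indicator Δ ω ∂P ∈ Set.Icc 0 (∫ ω, Δ ω ∂P) :=
  ⟨integral_nonneg (S.indicator_nonneg fun ω _ => hΔ0 ω),
    integral_mono_of_nonneg (Eventually.of_forall (S.indicator_nonneg fun ω _ => hΔ0 ω)) hΔ
      (Eventually.of_forall (S.indicator_le_self' fun ω _ => hΔ0 ω))⟩

theorem bandMass_mem_Icc (a ε : ℝ) : bandMass P Δ ρ a ε ∈ Set.Icc 0 (∫ ω, Δ ω ∂P) := by
  have hu := fun l => integral_indicator_mem_Icc hΔ0 hΔ {ω' | ρ l ω' ∈ Set.Ico (a - ε) (a + ε)}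
  exact ⟨le_liminf_of_le (isCoboundedUnder_ge_of_le atTop fun l => (hu l).2)
      (Eventually.of_forall fun l => (hu l).1),
    liminf_le_of_frequently_le (Frequently.of_forall fun l => (hu l).2)
      (isBoundedUnder_of ⟨0, fun l => (hu l).1⟩)⟩

theorem sum_bandMass_le (hρ : ∀ l, Measurable (ρ l)) (t : Finset ℝ) {ε : ℝ}
    (hd : (t : Set ℝ).PairwiseDisjoint fun a => Set.Ico (a - ε) (a + ε)) :
    ∑ a ∈ t, bandMass P Δ ρ a ε ≤ ∫ ω, Δ ω ∂P :=
  t.sum_liminf_le_of_eventually_sum_le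
    (fun _ _ => (integral_indicator_mem_Icc hΔ0 hΔ _).1)
    (fun _ _ => (integral_indicator_mem_Icc hΔ0 hΔ _).2)
    (Eventually.of_forall fun l => sum_integral_indicator_le_integral
      (fun _ _ => hρ l measurableSet_Ico) (fun _ ha _ hb hab => (hd ha hb hab).preimage (ρ l))
      (Eventually.of_forall hΔ0) hΔ)

theorem sum_liminf_bandMass_le (hρ : ∀ l, Measurable (ρ l)) (t : Finset ℝ) :
    ∑ a ∈ t, liminf (bandMass P Δ ρ a) (nhdsWithin 0 (Set.Ioi 0)) ≤ ∫ ω, Δ ω ∂P :=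
  t.sum_liminf_le_of_eventually_sum_le
    (fun a ε => (bandMass_mem_Icc hΔ0 hΔ a ε).1) (fun a ε => (bandMass_mem_Icc hΔ0 hΔ a ε).2)
    (t.eventually_nhdsGT_pairwiseDisjoint_Ico.mono fun _ hd => sum_bandMass_le hΔ0 hΔ hρ t hd)

end Windows

theorem exceptional_levels_countable_general {Ω : Type} [MeasurableSpace Ω]
    (P : Measure Ω)
    (Δ : Ω → ℝ) (hΔ0 : ∀ ω, 0 ≤ Δ ω) (hΔint : Integrable Δ P)
    (ρ : ℕ → Ω → ℝ) (hρ : ∀ l, Measurable (ρ l))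
    (𝔈 : ℝ → ℝ)
    (h𝔈 : ∀ η, 𝔈 η =
      liminf (fun ε : ℝ =>
          liminf (fun l : ℕ =>
              ∫ ω, Set.indicator {ω' | ρ l ω' ∈ Set.Ico (2 * η - ε) (2 * η + ε)} Δ ω ∂P)
            atTop)
        (nhdsWithin 0 (Set.Ioi (0 : ℝ)))) :
    (∀ K : ℕ, 0 < K →
        ∀ s : Finset ℝ, (↑s ⊆ {η : ℝ | 0 < η ∧ 1 / (K : ℝ) ≤ 𝔈 η}) →
          (s.card : ℝ) ≤ 2 * (∫ ω, Δ ω ∂P) * K) ∧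
      {η : ℝ | 0 < η ∧ 0 < 𝔈 η}.Countable := by
  have hsum (s : Finset ℝ) : ∑ η ∈ s, 𝔈 η ≤ ∫ ω, Δ ω ∂P := by
    have hinj : Set.InjOn (2 * ·) (s : Set ℝ) := fun x _ y _ h => by simpa using h
    calc ∑ η ∈ s, 𝔈 η
        = ∑ a ∈ s.image (2 * ·), liminf (bandMass P Δ ρ a) (nhdsWithin 0 (Set.Ioi 0)) := by
          rw [Finset.sum_image hinj]; exact Finset.sum_congr rfl fun η _ => h𝔈 η
      _ ≤ ∫ ω, Δ ω ∂P := sum_liminf_bandMass_le hΔ0 hΔint hρ _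
  have hcard (K : ℕ) (hK : 0 < K) (s : Finset ℝ)
      (hs : ↑s ⊆ {η : ℝ | 0 < η ∧ 1 / (K : ℝ) ≤ 𝔈 η}) : (s.card : ℝ) ≤ (∫ ω, Δ ω ∂P) * K := by
    have : (s.card : ℝ) / K ≤ ∫ ω, Δ ω ∂P := calc
      (s.card : ℝ) / K = ∑ _η ∈ s, 1 / (K : ℝ) := by simp [div_eq_mul_inv]
      _ ≤ ∑ η ∈ s, 𝔈 η := Finset.sum_le_sum fun η hη => (hs hη).2
      _ ≤ ∫ ω, Δ ω ∂P := hsum s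
    rwa [div_le_iff₀ (by exact_mod_cast hK)] at this
  have hI : 0 ≤ ∫ ω, Δ ω ∂P := integral_nonneg hΔ0
  refine ⟨fun K hK s hs => (hcard K hK s hs).trans (by nlinarith [(K.cast_nonneg : (0:ℝ) ≤ K)]), ?_⟩
  have hcover : {η : ℝ | 0 < η ∧ 0 < 𝔈 η} ⊆
      ⋃ n : ℕ, {η : ℝ | 0 < η ∧ 1 / ((n + 1 : ℕ) : ℝ) ≤ 𝔈 η} := fun η ⟨hη, h𝔈η⟩ => by
    obtain ⟨n, hn⟩ := exists_nat_one_div_lt h𝔈η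
    exact Set.mem_iUnion.2 ⟨n, hη, by exact_mod_cast hn.le⟩
  refine (Set.countable_iUnion fun n => ?_).mono hcover
  exact (Set.finite_of_forall_finset_card_le _ fun t ht =>
    Nat.le_floor (hcard (n + 1) n.succ_pos t ht)).countable

/-- **Countably many exceptional levels.**
For an integrable nonnegative `Δ` and measurable `ρ_l`, setting
`𝔈(η) = liminf_{ε→0⁺} liminf_{l→∞} E[Δ · 1{ρ_l ∈ [2η-ε, 2η+ε)}]`,
for every positive integer `K` the set `{η > 0 : 𝔈(η) ≥ 1/K}` has at most
`2·E[Δ]·K` elements; in particular `{η > 0 : 𝔈(η) > 0}` is countable. -/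
theorem exceptional_levels_countable {Ω : Type} [MeasurableSpace Ω]
    (P : Measure Ω) [IsProbabilityMeasure P]
    (Δ : Ω → ℝ) (hΔ0 : ∀ ω, 0 ≤ Δ ω) (hΔint : Integrable Δ P)
    (ρ : ℕ → Ω → ℝ) (hρ : ∀ l, Measurable (ρ l))
    (𝔈 : ℝ → ℝ)
    (h𝔈 : ∀ η, 𝔈 η =
      liminf (fun ε : ℝ =>
          liminf (fun l : ℕ =>
              ∫ ω, Set.indicator {ω' | ρ l ω' ∈ Set.Ico (2 * η - ε) (2 * η + ε)} Δ ω ∂P)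
            atTop)
        (nhdsWithin 0 (Set.Ioi (0 : ℝ)))) :
    (∀ K : ℕ, 0 < K →
        ∀ s : Finset ℝ, (↑s ⊆ {η : ℝ | 0 < η ∧ 1 / (K : ℝ) ≤ 𝔈 η}) →
          (s.card : ℝ) ≤ 2 * (∫ ω, Δ ω ∂P) * K) ∧
      {η : ℝ | 0 < η ∧ 0 < 𝔈 η}.Countable :=
  exceptional_levels_countable_general P Δ hΔ0 hΔint ρ hρ 𝔈 h𝔈
end

section
/- Let G = (V,E) be a finite simple graph, β ≥ 0, and let ν be the Ising measure on G with zero external field. Let S ⊆ V and let K be the number of edges of G with exactly one endpoint in S. Then for every spin configuration σ : S → {−1,+1}, ν( Σ_{j ∈ V\S} x_j ≥ 0 | x_S = σ ) ≥ (1/2)·e^{−2βK}. -/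
/-!
Flipping every spin outside `S` is an involution of the configurations that agree with `σ` on
`S`. It negates the magnetization `Σ_{j ∉ S} x_j` and changes the sign of the edge terms of the
`K` boundary edges only, so it lowers the energy by at most `2βK`. Hence the Gibbs weight of
`{magnetization < 0}` is at most `e^{2βK}` times that of `{magnetization ≥ 0}`, and the
conditional probability of the latter is at least `1 / (1 + e^{2βK}) ≥ ½ e^{-2βK}`.
-/

open Real Finset

attribute [local instance] Classical.propDecidable

variable {V : Type} [Fintype V]

/-- zero-field Ising Hamiltonian `β Σ_{(i,j)∈E} x_i x_j`. -/
noncomputable def ham0 (G : SimpleGraph V) (β : ℝ) (x : V → Bool) : ℝ :=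
  β * ∑ e ∈ G.edgeFinset, edgeTerm x e

theorem Finset.sum_le_mul_sum_of_injOn {ι R : Type*} [DecidableEq ι] [CommSemiring R]
    [PartialOrder R] [IsOrderedRing R] {s t : Finset ι} {w : ι → R} {f : ι → ι} {c : R}
    (hc : 0 ≤ c) (ht : ∀ x ∈ t, 0 ≤ w x) (hf : Set.InjOn f s) (hst : ∀ x ∈ s, f x ∈ t)
    (hw : ∀ x ∈ s, w x ≤ c * w (f x)) :
    ∑ x ∈ s, w x ≤ c * ∑ x ∈ t, w x :=
  calc ∑ x ∈ s, w x ≤ ∑ x ∈ s, c * w (f x) := sum_le_sum hw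
    _ = c * ∑ y ∈ s.image f, w y := by rw [sum_image hf, mul_sum]
    _ ≤ c * ∑ y ∈ t, w y :=
      mul_le_mul_of_nonneg_left
        (sum_le_sum_of_subset_of_nonneg (image_subset_iff.mpr hst) fun y hy _ => ht y hy) hc

lemma spin_not (b : Bool) : spin (!b) = -spin b := by cases b <;> simp [spin]

lemma edgeTerm_mk {ι : Type} (x : ι → Bool) (a b : ι) :
    edgeTerm x s(a, b) = spin (x a) * spin (x b) := rfl

lemma edgeTerm_le_one {ι : Type} (x : ι → Bool) (e : Sym2 ι) : edgeTerm x e ≤ 1 := by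
  induction e using Sym2.inductionOn with
  | hf a b => rw [edgeTerm_mk]; cases x a <;> cases x b <;> norm_num [spin]

def CrossesBoundary {ι : Type*} (S : Finset ι) (e : Sym2 ι) : Prop :=
  ∃ u v, e = s(u, v) ∧ u ∈ S ∧ v ∉ S

lemma crossesBoundary_mk_iff {ι : Type*} (S : Finset ι) (a b : ι) :
    CrossesBoundary S s(a, b) ↔ (a ∈ S ↔ b ∉ S) := by
  simp only [CrossesBoundary, Sym2.eq_iff]
  constructor
  · rintro ⟨u, v, (⟨rfl, rfl⟩ | ⟨rfl, rfl⟩), hu, hv⟩ <;> tauto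
  · intro h
    by_cases ha : a ∈ S
    · exact ⟨a, b, Or.inl ⟨rfl, rfl⟩, ha, h.mp ha⟩
    · exact ⟨b, a, Or.inr ⟨rfl, rfl⟩, not_not.mp (mt h.mpr ha), ha⟩

noncomputable def flipOutside {ι : Type*} (S : Finset ι) (z : ι → Bool) : ι → Bool :=
  fun v => if v ∈ S then z v else !z v

section Flip

variable {ι : Type} (S : Finset ι)

lemma flipOutside_involutive : Function.Involutive (flipOutside S) := by
  intro z
  funext v
  by_cases hv : v ∈ S <;> simp [flipOutside, hv]

lemma flipOutside_of_mem (z : ι → Bool) {v : ι} (hv : v ∈ S) : flipOutside S z v = z v :=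
  if_pos hv

lemma spin_flipOutside_of_not_mem (z : ι → Bool) {v : ι} (hv : v ∉ S) :
    spin (flipOutside S z v) = -spin (z v) := by
  rw [flipOutside, if_neg hv, spin_not]

lemma sum_compl_spin_flipOutside [Fintype ι] (z : ι → Bool) :
    ∑ j ∈ Sᶜ, spin (flipOutside S z j) = -∑ j ∈ Sᶜ, spin (z j) := by
  rw [← sum_neg_distrib]
  exact sum_congr rfl fun j hj => spin_flipOutside_of_not_mem S z (mem_compl.mp hj)

lemma edgeTerm_flipOutside (z : ι → Bool) (e : Sym2 ι) :
    edgeTerm (flipOutside S z) e =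
      if CrossesBoundary S e then -edgeTerm z e else edgeTerm z e := by
  induction e using Sym2.inductionOn with
  | hf a b =>
    simp only [edgeTerm_mk, crossesBoundary_mk_iff]
    by_cases ha : a ∈ S <;> by_cases hb : b ∈ S <;>
      simp [ha, hb, flipOutside_of_mem, spin_flipOutside_of_not_mem]

end Flip

lemma ham0_le_ham0_flipOutside_add (G : SimpleGraph V) {β : ℝ} (hβ : 0 ≤ β) (S : Finset V)
    (z : V → Bool) :
    ham0 G β z ≤
      ham0 G β (flipOutside S z) + 2 * β * #(G.edgeFinset.filter (CrossesBoundary S)) := by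
  have hedge : ∀ e, edgeTerm z e ≤
      edgeTerm (flipOutside S z) e + if CrossesBoundary S e then 2 else 0 := by
    intro e
    rw [edgeTerm_flipOutside]
    split_ifs
    · linarith [edgeTerm_le_one z e]
    · simp
  calc ham0 G β z = β * ∑ e ∈ G.edgeFinset, edgeTerm z e := rfl
    _ ≤ β * ∑ e ∈ G.edgeFinset,
          (edgeTerm (flipOutside S z) e + if CrossesBoundary S e then 2 else 0) := by
      gcongr with e; exact hedge e
    _ = _ := by rw [sum_add_distrib, ← sum_filter, sum_const, nsmul_eq_mul, ham0]; ring

lemma inv_two_mul_inv_le_div_add {N B c : ℝ} (hN : 0 ≤ N) (hc : 1 ≤ c) (hB : B ≤ c * N)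
    (hpos : 0 < N + B) : 1 / 2 * c⁻¹ ≤ N / (N + B) := by
  rw [le_div_iff₀ hpos]
  field_simp
  nlinarith

/-- **Conditional positivity of magnetization outside a small set.**
For the zero-field Ising measure `ν` on a finite graph `G`, a vertex set `S`
touched by `K` boundary edges, and any fixed configuration `σ` on `S`,
`ν( Σ_{j∉S} x_j ≥ 0 | x_S = σ ) ≥ ½ e^{-2βK}`. -/
theorem conditional_nonneg_magnetization (G : SimpleGraph V)
    (β : ℝ) (hβ : 0 ≤ β) (S : Finset V) (σ : V → Bool)
    (K : ℕ)
    (hK : K = (G.edgeFinset.filter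
        (fun e => ∃ u v, e = s(u, v) ∧ u ∈ S ∧ v ∉ S)).card) :
    (1 / 2) * Real.exp (-2 * β * K) ≤
      (∑ z : V → Bool,
          if (∀ u ∈ S, z u = σ u) ∧ 0 ≤ ∑ j ∈ Sᶜ, spin (z j) then
            Real.exp (ham0 G β z) else 0) /
        (∑ z : V → Bool,
          if (∀ u ∈ S, z u = σ u) then Real.exp (ham0 G β z) else 0) := by
  replace hK : K = #(G.edgeFinset.filter (CrossesBoundary S)) := by convert hK; rfl
  rw [← sum_filter, ← sum_filter, ← filter_filter]
  set A := univ.filter fun z : V → Bool => ∀ u ∈ S, z u = σ u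
  set m := fun z : V → Bool => ∑ j ∈ Sᶜ, spin (z j)
  set w := fun z => Real.exp (ham0 G β z)
  have hsplit : ∑ z ∈ A, w z = ∑ z ∈ A.filter (0 ≤ m ·), w z + ∑ z ∈ A.filter (¬0 ≤ m ·), w z :=
    (sum_filter_add_sum_filter_not _ _ _).symm
  have hflip : ∑ z ∈ A.filter (¬0 ≤ m ·), w z ≤
      Real.exp (2 * β * K) * ∑ z ∈ A.filter (0 ≤ m ·), w z := by
    refine sum_le_mul_sum_of_injOn (Real.exp_pos _).le (fun z _ => (Real.exp_pos _).le)
      (flipOutside_involutive S).injective.injOn (fun z hz => ?_) (fun z _ => ?_)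
    · simp only [mem_filter, mem_univ, true_and, A] at hz ⊢
      refine ⟨fun u hu => (flipOutside_of_mem S z hu).trans (hz.1 u hu), ?_⟩
      simp only [m, sum_compl_spin_flipOutside]
      linarith [hz.2]
    · rw [← Real.exp_add, Real.exp_le_exp, hK]
      linarith [ham0_le_ham0_flipOutside_add G hβ S z]
  have hpos : 0 < ∑ z ∈ A, w z := sum_pos (fun z _ => Real.exp_pos _) ⟨σ, by simp [A]⟩
  rw [hsplit] at hpos ⊢
  rw [neg_mul, neg_mul, Real.exp_neg]
  exact inv_two_mul_inv_le_div_add (sum_nonneg fun z _ => (Real.exp_pos _).le)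
    (Real.one_le_exp (by positivity)) hflip hpos
end

section
/- Let t ≥ 1, let R be a nonempty finite set, for each k ∈ {1,…,t} let E_k be a nonempty finite set and π_k : R → E_k a function, and let p : R → [0,∞) with Σ_{y∈R} p(y) = 1. Define ϖ_k(e) := Σ_{y : π_k(y)=e} p(y) for e ∈ E_k. Then for every θ > 0, max_{y∈R} Σ_{k=1}^t θ^{−2k} ϖ_k(π_k(y))² ≥ Σ_{k=1}^t θ^{−2k} |E_k|^{−2}. -/
open Finset

attribute [local instance] Classical.propDecidable

/-- **Lower bound on the energy of a unit flow along some ray.**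
Let `R` be a nonempty finite set of "rays", `π_k : R → E_k` the "edge at depth `k`"
maps (`k = 1,…,t`), and `p` a probability vector on `R`, inducing flows
`ϖ_k(e) = Σ_{y : π_k(y)=e} p(y)`.  Then for every `θ > 0`,
`max_{y ∈ R} Σ_{k=1}^t θ^{-2k} ϖ_k(π_k(y))² ≥ Σ_{k=1}^t θ^{-2k} |E_k|^{-2}`. -/
theorem flow_energy_ray_lower_bound (t : ℕ) (ht : 1 ≤ t)
    (R : Type) [Fintype R] [Nonempty R]
    (E : Fin t → Type) [∀ k, Fintype (E k)] [∀ k, Nonempty (E k)]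
    (π : ∀ k : Fin t, R → E k)
    (p : R → ℝ) (hp0 : ∀ y, 0 ≤ p y) (hp1 : ∑ y, p y = 1)
    (θ : ℝ) (hθ : 0 < θ) :
    ∑ k : Fin t, 1 / (θ ^ (2 * ((k : ℕ) + 1)) * ((Fintype.card (E k) : ℝ)) ^ 2) ≤
      Finset.univ.sup' Finset.univ_nonempty (fun y : R =>
        ∑ k : Fin t,
          (∑ z ∈ Finset.univ.filter (fun z : R => π k z = π k y), p z) ^ 2 /
            θ ^ (2 * ((k : ℕ) + 1))) := by
  classical
  set f : R → ℝ := fun y =>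
    ∑ k : Fin t,
      (∑ z ∈ Finset.univ.filter (fun z : R => π k z = π k y), p z) ^ 2 /
        θ ^ (2 * ((k : ℕ) + 1)) with hf
  set S := Finset.univ.sup' Finset.univ_nonempty f with hS
  -- Step 1: for each k, the bound holds for a p-weighted average
  have key : ∀ k : Fin t,
      1 / (θ ^ (2 * ((k : ℕ) + 1)) * ((Fintype.card (E k) : ℝ)) ^ 2) ≤
        ∑ y : R, p y *
          ((∑ z ∈ Finset.univ.filter (fun z : R => π k z = π k y), p z) ^ 2 /
            θ ^ (2 * ((k : ℕ) + 1))) := by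
    intro k
    set ϖ : E k → ℝ := fun e => ∑ z ∈ Finset.univ.filter (fun z : R => π k z = e), p z with hϖ
    have hϖ0 : ∀ e, 0 ≤ ϖ e := fun e => Finset.sum_nonneg fun z _ => hp0 z
    have hϖ1 : ∑ e : E k, ϖ e = 1 := by
      rw [← hp1]
      exact Finset.sum_fiberwise Finset.univ (π k) p
    -- rewrite RHS as ∑_e ϖ e ^ 3 / θ^..
    have hRHS : ∑ y : R, p y *
          ((∑ z ∈ Finset.univ.filter (fun z : R => π k z = π k y), p z) ^ 2 /
            θ ^ (2 * ((k : ℕ) + 1)))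
        = ∑ e : E k, ϖ e ^ 3 / θ ^ (2 * ((k : ℕ) + 1)) := by
      rw [← Finset.sum_fiberwise Finset.univ (π k)
        (fun y => p y *
          ((∑ z ∈ Finset.univ.filter (fun z : R => π k z = π k y), p z) ^ 2 /
            θ ^ (2 * ((k : ℕ) + 1))))]
      refine Finset.sum_congr rfl fun e _ => ?_
      have : ∀ y ∈ Finset.univ.filter (fun y : R => π k y = e),
          p y * ((∑ z ∈ Finset.univ.filter (fun z : R => π k z = π k y), p z) ^ 2 /
            θ ^ (2 * ((k : ℕ) + 1)))
          = p y * (ϖ e ^ 2 / θ ^ (2 * ((k : ℕ) + 1))) := by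
        intro y hy
        rw [Finset.mem_filter] at hy
        rw [hy.2]
      rw [Finset.sum_congr rfl this, ← Finset.sum_mul]
      show (ϖ e) * (ϖ e ^ 2 / θ ^ (2 * ((k : ℕ) + 1))) = _
      ring
    rw [hRHS]
    have hcard : (0 : ℝ) < (Fintype.card (E k) : ℝ) := by
      exact_mod_cast Fintype.card_pos
    have hjensen := pow_sum_div_card_le_sum_pow (s := (Finset.univ : Finset (E k)))
      (f := ϖ) (fun i _ => hϖ0 i) 2
    rw [hϖ1, Finset.card_univ] at hjensen
    simp only [one_pow] at hjensen
    have hθp : (0 : ℝ) < θ ^ (2 * ((k : ℕ) + 1)) := pow_pos hθ _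
    rw [← Finset.sum_div]
    rw [one_div, mul_inv, ← one_div, ← one_div, div_mul_eq_mul_div, one_mul]
    apply div_le_div_of_nonneg_right _ hθp.le
    exact hjensen
  -- Step 2: sum over k, swap, bound by sup
  calc ∑ k : Fin t, 1 / (θ ^ (2 * ((k : ℕ) + 1)) * ((Fintype.card (E k) : ℝ)) ^ 2)
      ≤ ∑ k : Fin t, ∑ y : R, p y *
          ((∑ z ∈ Finset.univ.filter (fun z : R => π k z = π k y), p z) ^ 2 /
            θ ^ (2 * ((k : ℕ) + 1))) := Finset.sum_le_sum fun k _ => key k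
    _ = ∑ y : R, p y * f y := by
        rw [Finset.sum_comm]
        exact Finset.sum_congr rfl fun y _ => by rw [hf, Finset.mul_sum]
    _ ≤ ∑ y : R, p y * S :=
        Finset.sum_le_sum fun y _ =>
          mul_le_mul_of_nonneg_left (Finset.le_sup' f (Finset.mem_univ y)) (hp0 y)
    _ = S := by rw [← Finset.sum_mul, hp1, one_mul]
end
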